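/- Let A and P be finite nonempty sets of complex numbers with |P| ≥ 2, let u, v ∈ ℂ, and let Q = Q(P, A, u, v) := ⋃_{p ∈ P} (u·p + (v·p − p + 1)·A), where u·p + (v·p − p + 1)·A := {u·p + (v·p − p + 1)·a : a ∈ A}. If Q has exactly |A|·|P| points, then S_P(Q) ≥ |P|·S_P(A) + |A|. -/

import Mathlib

open MeasureTheory

noncomputable section

/-- `Q` is a similar copy of `P`: the image of `P` under an
orientation-preserving similarity `p ↦ z·p + w`, `z ≠ 0`. -/
def IsSimilarCopy (P Q : Finset ℂ) : Prop :=
  ∃ z w : ℂ, z ≠ 0 ∧ (Q : Set ℂ) = (fun p => z * p + w) '' (P : Set ℂ)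

/-- `SP P Q` is the number of subsets of `Q` that are similar copies of `P`. -/
def SP (P Q : Finset ℂ) : ℕ :=
  letI := Classical.decPred (IsSimilarCopy P)
  (Q.powerset.filter (IsSimilarCopy P)).card

/-- `Q` has no `m` points on a line: every collinear subset has at most `m - 1` points. -/
def NoMOnLine (m : ℕ) (Q : Finset ℂ) : Prop :=
  ∀ S ⊆ Q, Collinear ℝ (S : Set ℂ) → S.card ≤ m - 1

/-- `Q` has `m` points on a line. -/
def HasMOnLine (m : ℕ) (Q : Finset ℂ) : Prop :=
  ∃ S ⊆ Q, S.card = m ∧ Collinear ℝ (S : Set ℂ)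

/-- The number of orientation-preserving isometries of `ℂ` mapping `P` onto itself,
i.e. maps `p ↦ u·p + w` with `|u| = 1` fixing `P` setwise. -/
def IsoPlusCard (P : Finset ℂ) : ℕ :=
  {uw : ℂ × ℂ | ‖uw.1‖ = 1 ∧
    (fun p => uw.1 * p + uw.2) '' (P : Set ℂ) = (P : Set ℂ)}.ncard

/-- The index of `A` with respect to the pattern `P`. -/
def indexP (P A : Finset ℂ) : ℝ :=
  Real.log ((IsoPlusCard P : ℝ) * SP P A + A.card) / Real.log A.card

/-- `SPnm P n m` : the maximum of `SP P Q` over `n`-point sets `Q`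
with no `m` points on a line. -/
def SPnm (P : Finset ℂ) (n m : ℕ) : ℕ :=
  sSup {k | ∃ Q : Finset ℂ, Q.card = n ∧ NoMOnLine m Q ∧ SP P Q = k}

/-- `SPn P n` : the maximum of `SP P Q` over all `n`-point sets `Q`. -/
def SPn (P : Finset ℂ) (n : ℕ) : ℕ :=
  sSup {k | ∃ Q : Finset ℂ, Q.card = n ∧ SP P Q = k}

/-- The Minkowski sum `B + C` of two finite sets of complex numbers. -/
def minkSum (B C : Finset ℂ) : Finset ℂ :=
  letI := Classical.decEq ℂ
  Finset.image₂ (· + ·) B C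

/-- `Q` contains four pairwise distinct points forming a parallelogram. -/
def HasParallelogram (Q : Finset ℂ) : Prop :=
  ∃ p₁ ∈ Q, ∃ p₂ ∈ Q, ∃ p₃ ∈ Q, ∃ p₄ ∈ Q,
    p₁ ≠ p₂ ∧ p₁ ≠ p₃ ∧ p₁ ≠ p₄ ∧ p₂ ≠ p₃ ∧ p₂ ≠ p₄ ∧ p₃ ≠ p₄ ∧
    p₂ - p₁ = p₄ - p₃

/-- `Q` is parallelogram-free: no 3 collinear points and no parallelogram. -/
def ParallelogramFree (Q : Finset ℂ) : Prop :=
  (∀ S ⊆ Q, Collinear ℝ (S : Set ℂ) → S.card ≤ 2) ∧ ¬ HasParallelogram Q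

/-- The set `Q(P, A, u, v) = ⋃_{p ∈ P} (u·p + (v·p − p + 1)·A)`. -/
def Qset (P A : Finset ℂ) (u v : ℂ) : Finset ℂ :=
  letI := Classical.decEq ℂ
  P.biUnion fun p => A.image fun a => u * p + (v * p - p + 1) * a

/-- The vertex set of the regular `k`-gon. -/
def Rpoly (k : ℕ) : Finset ℂ :=
  letI := Classical.decEq ℂ
  (Finset.range k).image fun j : ℕ => Complex.exp (2 * Real.pi * Complex.I * (j : ℂ) / (k : ℂ))

/-- `ω = e^{2πi/3}`. -/
def omega3 : ℂ := Complex.exp (2 * Real.pi * Complex.I / 3)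

/-- The vertex set `{1, ω, ω²}` of an equilateral triangle. -/
def triEq : Finset ℂ :=
  letI := Classical.decEq ℂ
  {1, omega3, omega3 ^ 2}

/-! Write `f p a = u·p + (v·p − p + 1)·a`, so that `Q` is the image of the grid `P × A` under `f`
and the cardinality hypothesis says that `f` is injective on the grid. For fixed `p` the row map
`f p` is affine, so it carries each of the `S_P(A)` copies of `P` inside `A` to a copy inside `Q`;
for fixed `a` the column map `p ↦ (u + (v − 1)·a)·p + a` is affine, so each column `f(P, a)` is a
copy of `P` itself. Injectivity on the grid keeps these affine maps non-degenerate and makes the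
`|P|·S_P(A)` row copies and the `|A|` columns pairwise distinct: a row copy lies in a single row,
while a column meets every row. -/

namespace IsSimilarCopy

theorem refl (P : Finset ℂ) : IsSimilarCopy P P :=
  ⟨1, 0, one_ne_zero, by simp⟩

theorem card_eq {P Q : Finset ℂ} (h : IsSimilarCopy P Q) : Q.card = P.card := by
  classical
  obtain ⟨z, w, hz, hQ⟩ := h
  have hQ' : Q = P.image fun p => z * p + w := Finset.coe_injective (by rw [Finset.coe_image, hQ])
  rw [hQ', Finset.card_image_of_injective]
  intro x y hxy
  exact mul_left_cancel₀ hz (add_right_cancel hxy)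

theorem nontrivial {P Q : Finset ℂ} (h : IsSimilarCopy P Q) (hP : P.Nontrivial) : Q.Nontrivial := by
  rw [← Finset.one_lt_card_iff_nontrivial] at hP ⊢
  exact h.card_eq ▸ hP

theorem image_of_injOn [DecidableEq ℂ] {P S : Finset ℂ} (h : IsSimilarCopy P S) (hS : S.Nontrivial)
    {c d : ℂ} (hinj : Set.InjOn (fun x => c * x + d) S) :
    IsSimilarCopy P (S.image fun x => c * x + d) := by
  obtain ⟨z, w, hz, hSP⟩ := h
  have hc : c ≠ 0 := by
    rintro rfl
    obtain ⟨x, hx, y, hy, hxy⟩ := hS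
    exact hxy (hinj hx hy (by simp))
  refine ⟨c * z, c * w + d, mul_ne_zero hc hz, ?_⟩
  rw [Finset.coe_image, hSP, Set.image_image]
  exact Set.image_congr fun p _ => by ring

end IsSimilarCopy

theorem card_le_SP {P Q : Finset ℂ} {𝒮 : Finset (Finset ℂ)} (h𝒮Q : 𝒮 ⊆ Q.powerset)
    (h𝒮P : ∀ S ∈ 𝒮, IsSimilarCopy P S) : 𝒮.card ≤ SP P Q := by
  classical
  exact Finset.card_le_card fun S hS => Finset.mem_filter.2 ⟨h𝒮Q hS, h𝒮P S hS⟩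

section Grid

variable {α β γ : Type*} {f : α → β → γ} {P : Finset α} {A : Finset β}

theorem eq_of_apply_eq (hf : Set.InjOn (Function.uncurry f) ↑(P ×ˢ A)) {p p' : α} {a a' : β}
    (hp : p ∈ P) (ha : a ∈ A) (hp' : p' ∈ P) (ha' : a' ∈ A) (h : f p a = f p' a') :
    p = p' ∧ a = a' :=
  Prod.ext_iff.1 <| hf (x₁ := (p, a)) (x₂ := (p', a')) (Finset.mem_product.2 ⟨hp, ha⟩)
    (Finset.mem_product.2 ⟨hp', ha'⟩) h

theorem injOn_row (hf : Set.InjOn (Function.uncurry f) ↑(P ×ˢ A)) {p : α} (hp : p ∈ P) :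
    Set.InjOn (f p) A :=
  fun _ ha _ ha' h => (eq_of_apply_eq hf hp ha hp ha' h).2

theorem injOn_column (hf : Set.InjOn (Function.uncurry f) ↑(P ×ˢ A)) {a : β} (ha : a ∈ A) :
    Set.InjOn (f · a) P :=
  fun _ hp _ hp' h => (eq_of_apply_eq hf hp ha hp' ha h).1

variable [DecidableEq γ]

def rowCopies (f : α → β → γ) (P : Finset α) (F : Finset (Finset β)) : Finset (Finset γ) :=
  (P ×ˢ F).image fun x => x.2.image (f x.1)

def columnCopies (f : α → β → γ) (P : Finset α) (A : Finset β) : Finset (Finset γ) :=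
  A.image fun a => P.image (f · a)

theorem card_rowCopies (hf : Set.InjOn (Function.uncurry f) ↑(P ×ˢ A))
    {F : Finset (Finset β)} (hF : ∀ B ∈ F, B ⊆ A ∧ B.Nonempty) :
    (rowCopies f P F).card = P.card * F.card := by
  rw [rowCopies, Finset.card_image_of_injOn, Finset.card_product]
  rintro ⟨p, B⟩ hpB ⟨p', B'⟩ hpB' hBB'
  simp only [Finset.coe_product, Set.mem_prod, Finset.mem_coe] at hpB hpB' hBB'
  obtain ⟨hBA, a, ha⟩ := hF B hpB.2
  obtain ⟨a', ha', hfa⟩ := Finset.mem_image.1 (hBB' ▸ Finset.mem_image_of_mem (f p) ha)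
  obtain rfl := (eq_of_apply_eq hf hpB'.1 ((hF B' hpB'.2).1 ha') hpB.1 (hBA ha) hfa).1
  rw [Finset.image_eq_image_iff_of_injOn (injOn_row hf hpB.1) hBA (hF B' hpB'.2).1] at hBB'
  rw [hBB']

theorem card_columnCopies (hf : Set.InjOn (Function.uncurry f) ↑(P ×ˢ A)) (hP : P.Nonempty) :
    (columnCopies f P A).card = A.card := by
  rw [columnCopies, Finset.card_image_of_injOn]
  intro a ha a' ha' haa'
  obtain ⟨p, hp⟩ := hP
  have hfa : f p a ∈ P.image (f · a') := by
    simpa only [haa'] using Finset.mem_image_of_mem (f · a) hp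
  obtain ⟨p', hp', hfp⟩ := Finset.mem_image.1 hfa
  exact (eq_of_apply_eq hf hp' ha' hp ha hfp).2.symm

theorem disjoint_rowCopies_columnCopies (hf : Set.InjOn (Function.uncurry f) ↑(P ×ˢ A))
    (hP : P.Nontrivial) {F : Finset (Finset β)} (hF : ∀ B ∈ F, B ⊆ A) :
    Disjoint (rowCopies f P F) (columnCopies f P A) := by
  rw [Finset.disjoint_left]
  rintro S hrow hcol
  obtain ⟨⟨p₀, B⟩, hpB, rfl⟩ := Finset.mem_image.1 hrow
  obtain ⟨a, ha, hcol⟩ := Finset.mem_image.1 hcol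
  rw [Finset.mem_product] at hpB
  have hP₀ : ∀ p ∈ P, p = p₀ := fun p hp => by
    obtain ⟨b, hb, hfb⟩ := Finset.mem_image.1 (hcol ▸ Finset.mem_image_of_mem (f · a) hp)
    exact (eq_of_apply_eq hf hpB.1 (hF B hpB.2 hb) hp ha hfb).1.symm
  obtain ⟨p, hp, p', hp', hpp'⟩ := hP
  exact hpp' ((hP₀ p hp).trans (hP₀ p' hp').symm)

theorem rowCopies_subset_powerset {F : Finset (Finset β)} (hF : ∀ B ∈ F, B ⊆ A) :
    rowCopies f P F ⊆ ((P ×ˢ A).image (Function.uncurry f)).powerset := by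
  intro S hS
  obtain ⟨⟨p, B⟩, hpB, rfl⟩ := Finset.mem_image.1 hS
  rw [Finset.mem_product] at hpB
  exact Finset.mem_powerset.2 <| Finset.image_subset_iff.2 fun a ha =>
    Finset.mem_image.2 ⟨(p, a), Finset.mem_product.2 ⟨hpB.1, hF B hpB.2 ha⟩, rfl⟩

theorem columnCopies_subset_powerset :
    columnCopies f P A ⊆ ((P ×ˢ A).image (Function.uncurry f)).powerset := by
  intro S hS
  obtain ⟨a, ha, rfl⟩ := Finset.mem_image.1 hS
  exact Finset.mem_powerset.2 <| Finset.image_subset_iff.2 fun p hp =>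
    Finset.mem_image.2 ⟨(p, a), Finset.mem_product.2 ⟨hp, ha⟩, rfl⟩

end Grid

def qsetMap (u v : ℂ) (p a : ℂ) : ℂ :=
  u * p + (v * p - p + 1) * a

section QsetMap

variable {P A : Finset ℂ} {u v : ℂ}

theorem Qset_eq_image [DecidableEq ℂ] (P A : Finset ℂ) (u v : ℂ) :
    Qset P A u v = (P ×ˢ A).image (Function.uncurry (qsetMap u v)) := by
  ext x
  simp [Qset, qsetMap]

theorem injOn_qsetMap_of_card_Qset (hcard : (Qset P A u v).card = A.card * P.card) :
    Set.InjOn (Function.uncurry (qsetMap u v)) ↑(P ×ˢ A) := by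
  classical
  rw [← Finset.card_image_iff, ← Qset_eq_image, hcard, Finset.card_product, mul_comm]

theorem isSimilarCopy_of_mem_rowCopies (hf : Set.InjOn (Function.uncurry (qsetMap u v)) ↑(P ×ˢ A))
    (hP : P.Nontrivial) {F : Finset (Finset ℂ)} (hF : ∀ B ∈ F, B ⊆ A ∧ IsSimilarCopy P B)
    {S : Finset ℂ} (hS : S ∈ rowCopies (qsetMap u v) P F) : IsSimilarCopy P S := by
  obtain ⟨⟨p, B⟩, hpB, rfl⟩ := Finset.mem_image.1 hS
  rw [Finset.mem_product] at hpB
  obtain ⟨hBA, hBP⟩ := hF B hpB.2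
  have hrow : qsetMap u v p = fun a => (v * p - p + 1) * a + u * p :=
    funext fun a => by simp only [qsetMap]; ring
  have hinj := (injOn_row hf hpB.1).mono hBA
  rw [hrow] at hinj ⊢
  exact hBP.image_of_injOn (hBP.nontrivial hP) hinj

theorem isSimilarCopy_of_mem_columnCopies
    (hf : Set.InjOn (Function.uncurry (qsetMap u v)) ↑(P ×ˢ A)) (hP : P.Nontrivial)
    {S : Finset ℂ} (hS : S ∈ columnCopies (qsetMap u v) P A) : IsSimilarCopy P S := by
  obtain ⟨a, ha, rfl⟩ := Finset.mem_image.1 hS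
  have hcol : (qsetMap u v · a) = fun p => (u + (v - 1) * a) * p + a :=
    funext fun p => by simp only [qsetMap]; ring
  have hinj := injOn_column hf ha
  rw [hcol] at hinj ⊢
  exact (IsSimilarCopy.refl P).image_of_injOn hP hinj

end QsetMap

theorem stmt12_general (P A : Finset ℂ) (hP : 2 ≤ P.card) (u v : ℂ)
    (hcard : (Qset P A u v).card = A.card * P.card) :
    P.card * SP P A + A.card ≤ SP P (Qset P A u v) := by
  classical
  have hf := injOn_qsetMap_of_card_Qset hcard
  have hPnt : P.Nontrivial := Finset.one_lt_card_iff_nontrivial.1 hP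
  set F := A.powerset.filter (IsSimilarCopy P)
  have hF : ∀ B ∈ F, B ⊆ A ∧ IsSimilarCopy P B := fun B hB => by
    simpa only [F, Finset.mem_filter, Finset.mem_powerset] using hB
  set rows := rowCopies (qsetMap u v) P F
  set cols := columnCopies (qsetMap u v) P A
  calc P.card * SP P A + A.card = (rows ∪ cols).card := by
        rw [Finset.card_union_of_disjoint
            (disjoint_rowCopies_columnCopies hf hPnt fun B hB => (hF B hB).1),
          card_rowCopies hf fun B hB => ⟨(hF B hB).1, ((hF B hB).2.nontrivial hPnt).nonempty⟩,
          card_columnCopies hf hPnt.nonempty]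
        rfl
    _ ≤ SP P (Qset P A u v) := by
        refine card_le_SP ?_ fun S hS => (Finset.mem_union.1 hS).elim
          (isSimilarCopy_of_mem_rowCopies hf hPnt hF) (isSimilarCopy_of_mem_columnCopies hf hPnt)
        rw [Qset_eq_image]
        exact Finset.union_subset (rowCopies_subset_powerset fun B hB => (hF B hB).1)
          columnCopies_subset_powerset

/-- If `Q = Q(P, A, u, v)` has exactly `|A|·|P|` points, then
`S_P(Q) ≥ |P|·S_P(A) + |A|`. -/
theorem stmt12 (P A : Finset ℂ) (hP : 2 ≤ P.card) (hA : A.Nonempty) (u v : ℂ)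
    (hcard : (Qset P A u v).card = A.card * P.card) :
    P.card * SP P A + A.card ≤ SP P (Qset P A u v) :=
  stmt12_general P A hP u v hcard
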